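/- (Exp–Log inversion at the pole.) Let c>0 and let x be any point on the forward hyperboloid 𝕃^n_{-c}. Then Exp_ō(Log_ō(x)) = x, where Exp_ō and Log_ō are the exponential and logarithmic maps of 𝕃^n_{-c} at the pole ō = (1/√c, 0). -/

import Mathlib

open scoped RealInnerProductSpace Classical

/-- The inverse hyperbolic cosine on `ℝ`: `arcosh x = log (x + √(x² - 1))`. -/
noncomputable def Real.arcosh' (x : ℝ) : ℝ := Real.log (x + Real.sqrt (x ^ 2 - 1))

/-- The Minkowski inner product on `ℝ × ℝ^n`. -/
noncomputable def mink {n : ℕ} (x y : ℝ × EuclideanSpace ℝ (Fin n)) : ℝ :=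
  -(x.1 * y.1) + ⟪x.2, y.2⟫

/-- The pole `ō = (1/√c, 0)` of the forward hyperboloid `𝕃^n_{-c}`. -/
noncomputable def pole (c : ℝ) (n : ℕ) : ℝ × EuclideanSpace ℝ (Fin n) :=
  (1 / Real.sqrt c, 0)

/-- The exponential map of `𝕃^n_{-c}` at the pole, applied to a tangent
vector `z = (0, z_s)`:  `Exp_ō(z) = ((1/√c)·cosh(√c‖z_s‖),
(1/√c)·sinh(√c‖z_s‖)·z_s/‖z_s‖)` for `z_s ≠ 0`, and `Exp_ō(0) = ō`. -/
noncomputable def Expo (c : ℝ) {n : ℕ} (z : ℝ × EuclideanSpace ℝ (Fin n)) :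
    ℝ × EuclideanSpace ℝ (Fin n) :=
  if z.2 = 0 then pole c n
  else ((1 / Real.sqrt c) * Real.cosh (Real.sqrt c * ‖z.2‖),
        ((1 / Real.sqrt c) * Real.sinh (Real.sqrt c * ‖z.2‖) / ‖z.2‖) • z.2)

/-- The logarithmic map of `𝕃^n_{-c}` at the pole:
`Log_ō(x) = (arcosh β / √(β²-1))·(x - β·ō)` with `β = -c·⟨ō,x⟩_L` for
`x ≠ ō`, and `Log_ō(ō) = 0`. -/
noncomputable def Logo (c : ℝ) {n : ℕ} (x : ℝ × EuclideanSpace ℝ (Fin n)) :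
    ℝ × EuclideanSpace ℝ (Fin n) :=
  if x = pole c n then 0
  else (Real.arcosh' (-c * mink (pole c n) x) /
          Real.sqrt ((-c * mink (pole c n) x) ^ 2 - 1)) •
        (x - (-c * mink (pole c n) x) • pole c n)

/-! A point `x` of the hyperboloid is at distance `arcosh β` from the pole, where `β = √c x₀`
satisfies `β² - 1 = c ‖x_s‖²`. Hence `Log_ō x` points along `x_s` with length `arcosh β / √c`,
and `Exp_ō` of it recovers `x` because `cosh (arcosh β) = β` and
`sinh (arcosh β) = √(β² - 1) = √c ‖x_s‖`. -/

open Real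

theorem Real.arcosh'_eq_arcosh : Real.arcosh' = Real.arcosh := rfl

section Hyperboloid

variable {c : ℝ} {n : ℕ} {x : ℝ × EuclideanSpace ℝ (Fin n)}

theorem neg_mul_mink_pole (c : ℝ) (x : ℝ × EuclideanSpace ℝ (Fin n)) :
    -c * mink (pole c n) x = √c * x.1 := by
  rw [mink, pole, inner_zero_left]
  calc -c * (-(1 / √c * x.1) + 0) = c / √c * x.1 := by ring
    _ = √c * x.1 := by rw [div_sqrt]

theorem sq_sqrt_mul_fst_sub_one (hc : 0 < c) (hx : mink x x = -(1 / c)) :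
    (√c * x.1) ^ 2 - 1 = (√c * ‖x.2‖) ^ 2 := by
  rw [mink, real_inner_self_eq_norm_sq] at hx
  rw [mul_pow, mul_pow, sq_sqrt hc.le]
  field_simp at hx ⊢
  linarith

theorem sqrt_sq_sqrt_mul_fst_sub_one (hc : 0 < c) (hx : mink x x = -(1 / c)) :
    √((√c * x.1) ^ 2 - 1) = √c * ‖x.2‖ := by
  rw [sq_sqrt_mul_fst_sub_one hc hx, sqrt_sq (by positivity)]

theorem eq_pole_of_snd_eq_zero (hc : 0 < c) (hx : mink x x = -(1 / c)) (hx0 : 0 < x.1)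
    (h2 : x.2 = 0) : x = pole c n := by
  have hsq : (√c * x.1) ^ 2 = 1 := by
    simpa [h2, sub_eq_zero] using sq_sqrt_mul_fst_sub_one hc hx
  have hβ : √c * x.1 = 1 :=
    (pow_eq_one_iff_of_nonneg (by positivity) two_ne_zero).mp hsq
  refine Prod.ext ?_ h2
  rw [pole, eq_div_iff (sqrt_pos.mpr hc).ne', mul_comm, hβ]

theorem one_lt_sqrt_mul_fst (hc : 0 < c) (hx : mink x x = -(1 / c)) (hx0 : 0 < x.1)
    (h2 : x.2 ≠ 0) : 1 < √c * x.1 := by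
  have hpos : 0 < (√c * ‖x.2‖) ^ 2 := by
    have := norm_pos_iff.mpr h2
    positivity
  have hβ : 0 < √c * x.1 := by positivity
  nlinarith [sq_sqrt_mul_fst_sub_one hc hx]

theorem Logo_of_snd_ne_zero (hc : 0 < c) (hx : mink x x = -(1 / c)) (h2 : x.2 ≠ 0) :
    Logo c x = (0, (arcosh (√c * x.1) / (√c * ‖x.2‖)) • x.2) := by
  have hxp : x ≠ pole c n := fun h ↦ h2 (by rw [h, pole])
  have hsub : x - (√c * x.1) • pole c n = (0, x.2) := by
    refine Prod.ext ?_ (by simp [pole])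
    simp only [pole, Prod.fst_sub, Prod.smul_fst, smul_eq_mul]
    field_simp [(sqrt_pos.mpr hc).ne']
    ring
  rw [Logo, if_neg hxp, neg_mul_mink_pole, sqrt_sq_sqrt_mul_fst_sub_one hc hx,
    Real.arcosh'_eq_arcosh, hsub, Prod.smul_mk, smul_zero]

/-- `Exp_ō` along the ray spanned by `v`, parametrised by arc length `t`. -/
theorem Expo_smul (hc : 0 < c) {v : EuclideanSpace ℝ (Fin n)} (hv : v ≠ 0) {t : ℝ}
    (ht : 0 < t) :
    Expo c ((0 : ℝ), (t / (√c * ‖v‖)) • v) = ((√c)⁻¹ * cosh t, (sinh t / (√c * ‖v‖)) • v) := by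
  have hsc := sqrt_pos.mpr hc
  have hvn := norm_pos_iff.mpr hv
  have hz : (t / (√c * ‖v‖)) • v ≠ 0 := smul_ne_zero (by positivity) hv
  have hnorm : ‖(t / (√c * ‖v‖)) • v‖ = t / √c := by
    rw [norm_smul, norm_div, norm_mul, norm_of_nonneg ht.le, norm_of_nonneg hsc.le, norm_norm]
    field_simp
  rw [Expo, if_neg hz, hnorm, mul_div_cancel₀ t hsc.ne', smul_smul, one_div]
  congr 2
  field_simp

end Hyperboloid

/-- **Exp–Log inversion at the pole.**
Let `c > 0` and let `x` lie on the forward hyperboloid `𝕃^n_{-c}`.  Then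
`Exp_ō(Log_ō(x)) = x`. -/
theorem exp_log_inversion (c : ℝ) (hc : 0 < c) (n : ℕ)
    (x : ℝ × EuclideanSpace ℝ (Fin n))
    (hx : mink x x = -(1 / c)) (hx0 : 0 < x.1) :
    Expo c (Logo c x) = x := by
  by_cases h2 : x.2 = 0
  · rw [eq_pole_of_snd_eq_zero hc hx hx0 h2]
    simp [Logo, Expo]
  have hβ := one_lt_sqrt_mul_fst hc hx hx0 h2
  have hsinh : sinh (arcosh (√c * x.1)) = √c * ‖x.2‖ := by
    rw [sinh_arcosh hβ.le, sqrt_sq_sqrt_mul_fst_sub_one hc hx]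
  have hsc := sqrt_pos.mpr hc
  have hr := norm_pos_iff.mpr h2
  rw [Logo_of_snd_ne_zero hc hx h2, Expo_smul hc h2 (arcosh_pos hβ), cosh_arcosh hβ.le, hsinh,
    div_self (by positivity), one_smul, inv_mul_cancel_left₀ hsc.ne']
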